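/- For m ≥ 0 and d ≥ 1 and each 1 ≤ j < d/2, the expression \sum_{i=0}^{j-1} (-1)^{i+d-j} e_i · (s_{(m-i+j, 1^{d-j})} + s_{(m-i+j+1, 1^{d-j-1})}) equals (-1)^{d-1} s_{(m+2, 2^{j-1}, 1^{d-2j})} + (-1)^{d-1} e_{j-1} · s_{(m+1, 1^{d-j})}, as symmetric functions (with m ≥ 1 assumed so all indexing sequences are partitions). -/

import Mathlib

/-!
All the identities come from expanding Jacobi–Trudi determinants along the first column.
For hooks this gives `s_{(a,1^{k+1})} + s_{(a+1,1^k)} = h_a e_{k+1}`, so each bracket on the left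
is `h_{m+j-i} e_{d-j}`, and the resulting alternating sum `∑ (-1)^i e_i h_{m+j-i}` is
`± s_{(m+1,1^{j-1})}`. What remains is the Pieri-type identity
`e_{d-j} s_{(m+1,1^{j-1})} = s_{(m+2,2^{j-1},1^{d-2j})} + e_{j-1} s_{(m+1,1^{d-j})}`, which follows
from Giambelli's formula for the Frobenius-rank-two shapes `(a, q+2, 2^b, 1^c)`; that formula is
proved by induction on `b`, again by first-column expansion.
-/

open MvPolynomial Finset

noncomputable section

/-- The ring of symmetric functions, as the free polynomial ring generated by the
complete homogeneous symmetric functions `h₁, h₂, …` (variable `n` is `h_{n+1}`). -/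
abbrev SymF := MvPolynomial ℕ ℤ

/-- The complete homogeneous symmetric function `h_n`, with `h_n = 0` for `n < 0`. -/
def hh : ℤ → SymF
  | Int.ofNat 0 => 1
  | Int.ofNat (n+1) => X n
  | Int.negSucc _ => 0

/-- The Schur function `s_λ` for `λ = (lam 0, lam 1, …, lam (l-1))`, defined by the
Jacobi–Trudi determinant `det (h_{λ_i - i + j})₁≤i,j≤l`. -/
def schur (l : ℕ) (lam : Fin l → ℕ) : SymF :=
  Matrix.det (Matrix.of fun i j : Fin l => hh ((lam i : ℤ) + (j : ℤ) - (i : ℤ)))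

/-- The elementary symmetric function `e_n = s_{(1^n)}`. -/
def ee (n : ℕ) : SymF := schur n (fun _ => 1)

/-- The skew Schur function `s_{λ/μ}`, via the Jacobi–Trudi determinant
`det (h_{λ_i - μ_j - i + j})`. -/
def skewSchur (l : ℕ) (lam mu : Fin l → ℕ) : SymF :=
  Matrix.det (Matrix.of fun i j : Fin l =>
    hh ((lam i : ℤ) - (mu j : ℤ) + (j : ℤ) - (i : ℤ)))

theorem hh_of_neg {z : ℤ} (hz : z < 0) : hh z = 0 := by
  match z, hz with
  | Int.negSucc _, _ => rfl

theorem hh_zero : hh 0 = 1 := rfl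

/-- The shape indexing the minor of the Jacobi–Trudi matrix of `lam` obtained by deleting
row `i` and the first column. -/
def laplaceMinor (lam : ℕ → ℕ) (i : ℕ) : ℕ → ℕ :=
  fun r => if r < i then lam r + 1 else lam (r + 1)

theorem schur_zero (lam : Fin 0 → ℕ) : schur 0 lam = 1 := Matrix.det_isEmpty

theorem schur_succ (n : ℕ) (lam : ℕ → ℕ) :
    schur (n + 1) (fun r => lam r) = ∑ i ∈ range (n + 1),
      (-1) ^ i * hh (lam i - i) * schur n (fun r => laplaceMinor lam i r) := by
  rw [schur, Matrix.det_succ_column_zero, ← Fin.sum_univ_eq_sum_range]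
  refine Fintype.sum_congr _ _ fun i => ?_
  congr 2
  refine Matrix.ext fun r j => ?_
  simp only [Matrix.submatrix_apply, Matrix.of_apply, laplaceMinor]
  congr 1
  rcases lt_or_ge (r : ℕ) i with h | h
  · rw [Fin.succAbove_of_castSucc_lt _ _ (by simpa [Fin.lt_def] using h), if_pos h]
    simp only [Fin.val_succ, Fin.val_castSucc]
    push_cast
    ring
  · rw [Fin.succAbove_of_le_castSucc _ _ (by simpa [Fin.le_def] using h), if_neg (by omega)]
    simp only [Fin.val_succ]
    push_cast
    ring

theorem schur_succ_eq_sum_range {n k : ℕ} (lam : ℕ → ℕ) (hk : k ≤ n + 1)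
    (hlam : ∀ i, k ≤ i → i ≤ n → lam i < i) :
    schur (n + 1) (fun r => lam r) = ∑ i ∈ range k,
      (-1) ^ i * hh (lam i - i) * schur n (fun r => laplaceMinor lam i r) := by
  rw [schur_succ]
  refine (sum_subset (range_subset_range.2 hk) fun i hin hik => ?_).symm
  have := hlam i (by simpa using hik) (by simpa [Nat.lt_succ_iff] using hin)
  rw [hh_of_neg (by omega), mul_zero, zero_mul]

def hookShape (a : ℕ) : ℕ → ℕ := fun i => if i = 0 then a else 1

/-- The hook Schur function `s_{(a, 1^k)}`. -/
def hook (a k : ℕ) : SymF := schur (k + 1) (fun i => hookShape a i)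

theorem hook_zero (a : ℕ) : hook a 0 = hh a := by
  rw [hook, schur_succ]
  simp [hookShape, schur_zero]

theorem hook_succ_add_hook (a k : ℕ) : hook a (k + 1) + hook (a + 1) k = hh a * ee (k + 1) := by
  have minor0 : laplaceMinor (hookShape a) 0 = fun _ => 1 := by
    funext r; simp [laplaceMinor, hookShape]
  have minor1 : laplaceMinor (hookShape a) 1 = hookShape (a + 1) := by
    funext r; rcases r with _ | r <;> simp [laplaceMinor, hookShape]
  rw [hook, schur_succ_eq_sum_range (k := 2) _ (by omega)
    (fun i hi _ => by rw [hookShape, if_neg (by omega)]; omega)]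
  simp [sum_range_succ, minor0, minor1, hookShape, hh_zero, hook, ee]

theorem hook_one (k : ℕ) : hook 1 k = ee (k + 1) := by
  rw [hook, ee]
  congr 1
  funext i
  simp [hookShape]

theorem sum_neg_one_pow_mul_ee_mul_hh (a k : ℕ) :
    ∑ i ∈ range (k + 1), (-1) ^ i * ee i * hh (a + k - i : ℕ) = (-1) ^ k * hook a k := by
  induction k generalizing a with
  | zero => simp [hook_zero, ee, schur_zero]
  | succ k ih =>
    have hsucc : (-1) ^ (k + 1) * hook a (k + 1) =
        (-1) ^ k * hook (a + 1) k + (-1) ^ (k + 1) * (hh a * ee (k + 1)) := by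
      rw [← hook_succ_add_hook]
      ring
    rw [sum_range_succ, hsucc, ← ih]
    congr 1
    · refine sum_congr rfl fun i _ => ?_
      rw [show a + (k + 1) - i = a + 1 + k - i by omega]
    · rw [show a + (k + 1) - (k + 1) = a by omega]
      ring

def nearHookShape (a q b : ℕ) : ℕ → ℕ :=
  fun i => if i = 0 then a else if i = 1 then q else if i ≤ b + 1 then 2 else 1

theorem nearHookShape_zero (a q b : ℕ) : nearHookShape a q b 0 = a := rfl

theorem nearHookShape_one (a q b : ℕ) : nearHookShape a q b 1 = q := rfl

theorem nearHookShape_two (a q b : ℕ) : nearHookShape a q (b + 1) 2 = 2 := by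
  simp [nearHookShape]

/-- The Schur function `s_{(a, q, 2^b, 1^c)}`. -/
def nearHook (a q b c : ℕ) : SymF := schur (b + c + 2) (fun i => nearHookShape a q b i)

theorem nearHook_zero (a q c : ℕ) :
    nearHook a (q + 1) 0 c = hh a * hook (q + 1) c - hh q * hook (a + 1) c := by
  have minor0 : laplaceMinor (nearHookShape a (q + 1) 0) 0 = hookShape (q + 1) := by
    funext r; rcases r with _ | r <;> simp [laplaceMinor, nearHookShape, hookShape]
  have minor1 : laplaceMinor (nearHookShape a (q + 1) 0) 1 = hookShape (a + 1) := by
    funext r; rcases r with _ | r <;> simp [laplaceMinor, nearHookShape, hookShape]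
  rw [nearHook, show 0 + c + 2 = c + 1 + 1 by omega, schur_succ_eq_sum_range (k := 2) _ (by omega)
    (fun i hi _ => by unfold nearHookShape; split_ifs <;> omega)]
  simp only [sum_range_succ, range_one, sum_singleton, minor0, minor1, nearHookShape_zero,
    nearHookShape_one, hook, Nat.cast_add, Nat.cast_one, Nat.cast_zero, sub_zero,
    add_sub_cancel_right]
  ring

theorem nearHook_succ (a q b c : ℕ) :
    nearHook a (q + 1) (b + 1) c =
      hh a * nearHook (q + 1) 2 b c - hh q * nearHook (a + 1) 2 b c
        + nearHook (a + 1) (q + 2) b c := by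
  have minor0 : laplaceMinor (nearHookShape a (q + 1) (b + 1)) 0 = nearHookShape (q + 1) 2 b := by
    funext r; rcases r with _ | _ | r <;> simp [laplaceMinor, nearHookShape]
  have minor1 : laplaceMinor (nearHookShape a (q + 1) (b + 1)) 1 = nearHookShape (a + 1) 2 b := by
    funext r; rcases r with _ | _ | r <;> simp [laplaceMinor, nearHookShape]
  have minor2 :
      laplaceMinor (nearHookShape a (q + 1) (b + 1)) 2 = nearHookShape (a + 1) (q + 2) b := by
    funext r; rcases r with _ | _ | r <;> simp [laplaceMinor, nearHookShape]
  rw [nearHook, show b + 1 + c + 2 = b + c + 2 + 1 by omega, schur_succ_eq_sum_range (k := 3) _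
    (by omega) (fun i hi _ => by unfold nearHookShape; split_ifs <;> omega)]
  simp only [sum_range_succ, range_one, sum_singleton, minor0, minor1, minor2, nearHookShape_zero,
    nearHookShape_one, nearHookShape_two, nearHook, Nat.cast_add, Nat.cast_one, Nat.cast_zero,
    sub_zero, add_sub_cancel_right, sub_self, hh_zero]
  ring

/-- Giambelli's formula for the Frobenius-rank-two shape `(a, q+2, 2^b, 1^c)`, whose Frobenius
coordinates are `(a-1, q | b+c+1, b)`. -/
theorem nearHook_eq_giambelli (a q b c : ℕ) :
    nearHook a (q + 2) b c =
      hook a (b + c + 1) * hook (q + 1) b - hook a b * hook (q + 1) (b + c + 1) := by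
  induction b generalizing a q with
  | zero =>
    have hq := hook_succ_add_hook (q + 1) c
    have ha := hook_succ_add_hook a c
    rw [nearHook_zero, zero_add, hook_zero, hook_zero]
    linear_combination hh a * hq - hh (q + 1 : ℕ) * ha
  | succ b ih =>
    rw [nearHook_succ, ih, ih, ih, zero_add, hook_one, hook_one,
      show b + 1 + c + 1 = b + c + 1 + 1 by omega]
    have ha := hook_succ_add_hook a b
    have hq := hook_succ_add_hook (q + 1) b
    have ha' := hook_succ_add_hook a (b + c + 1)
    have hq' := hook_succ_add_hook (q + 1) (b + c + 1)
    linear_combination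
      (hh a * ee (b + 1) - hook (a + 1) b) * hq' + hook (q + 1) (b + c + 1 + 1) * ha
        - (hh a * ee (b + c + 1 + 1) - hook (a + 1) (b + c + 1)) * hq - hook (q + 1) (b + 1) * ha'

theorem ee_mul_hook (a j c : ℕ) :
    ee (j + c + 1) * hook a j =
      schur (j + c + 1) (fun i => if (i : ℕ) = 0 then a + 1 else if (i : ℕ) ≤ j then 2 else 1)
        + ee j * hook a (j + c + 1) := by
  cases j with
  | zero =>
    have hshape : schur (0 + c + 1)
        (fun i => if (i : ℕ) = 0 then a + 1 else if (i : ℕ) ≤ 0 then 2 else 1)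
        = hook (a + 1) c := by
      rw [hook, zero_add]
      congr 1
      funext i
      unfold hookShape
      split_ifs <;> omega
    rw [hshape, hook_zero, zero_add, mul_comm, ← hook_succ_add_hook, ee, schur_zero]
    ring
  | succ b =>
    have hshape : schur (b + 1 + c + 1)
        (fun i => if (i : ℕ) = 0 then a + 1 else if (i : ℕ) ≤ b + 1 then 2 else 1)
        = nearHook (a + 1) 2 b c := by
      rw [nearHook, show b + c + 2 = b + 1 + c + 1 by omega]
      congr 1
      funext i
      unfold nearHookShape
      split_ifs <;> omega
    have hgiambelli := nearHook_eq_giambelli (a + 1) 0 b c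
    rw [zero_add, hook_one, hook_one] at hgiambelli
    rw [hshape, hgiambelli, show b + 1 + c + 1 = b + c + 1 + 1 by omega]
    have hb := hook_succ_add_hook a b
    have hbc := hook_succ_add_hook a (b + c + 1)
    linear_combination ee (b + c + 1 + 1) * hb - ee (b + 1) * hbc

theorem schur_eq_hook (a k : ℕ) :
    schur (k + 1) (fun i => if (i : ℕ) = 0 then a else 1) = hook a k := rfl

theorem stmt18_general (m d j : ℕ) (hj : 1 ≤ j) (hjd : 2 * j < d) :
    ∑ i ∈ Finset.range j, (-1 : SymF)^(i + d - j) * ee i *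
        (schur (d - j + 1) (fun k => if (k : ℕ) = 0 then m + j - i else 1)
          + schur (d - j) (fun k => if (k : ℕ) = 0 then m + j - i + 1 else 1))
    = (-1 : SymF)^(d-1) *
        schur (d - j)
          (fun k => if (k : ℕ) = 0 then m + 2 else if (k : ℕ) ≤ j - 1 then 2 else 1)
      + (-1 : SymF)^(d-1) * ee (j-1) *
          schur (d - j + 1) (fun k => if (k : ℕ) = 0 then m + 1 else 1) := by
  obtain ⟨b, rfl⟩ : ∃ b, j = b + 1 := ⟨j - 1, by omega⟩
  obtain ⟨c, hc⟩ : ∃ c, d - (b + 1) = b + c + 1 := ⟨d - 2 * (b + 1), by omega⟩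
  have hsign : ∀ i, i + d - (b + 1) = i + (b + c + 1) := fun i => by omega
  rw [hc, show d - 1 = b + c + 1 + b by omega, Nat.add_sub_cancel]
  simp only [hsign, schur_eq_hook, hook_succ_add_hook]
  calc _ = (-1) ^ (b + c + 1) * ee (b + c + 1) *
        ∑ i ∈ range (b + 1), (-1) ^ i * ee i * hh (m + 1 + b - i : ℕ) := by
        rw [mul_sum]
        refine sum_congr rfl fun i _ => ?_
        rw [show m + 1 + b - i = m + (b + 1) - i by omega, pow_add]
        ring
    _ = (-1) ^ (b + c + 1 + b) * (ee (b + c + 1) * hook (m + 1) b) := by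
        rw [sum_neg_one_pow_mul_ee_mul_hh]
        ring
    _ = _ := by
        rw [ee_mul_hook]
        ring

/-- For `m ≥ 1`, `d ≥ 1`, `1 ≤ j < d/2`:
`∑_{i=0}^{j-1} (-1)^{i+d-j} e_i (s_{(m-i+j,1^{d-j})} + s_{(m-i+j+1,1^{d-j-1})})
  = (-1)^{d-1} s_{(m+2,2^{j-1},1^{d-2j})} + (-1)^{d-1} e_{j-1} s_{(m+1,1^{d-j})}`. -/
theorem stmt18 (m d j : ℕ) (hm : 1 ≤ m) (hd : 1 ≤ d) (hj : 1 ≤ j) (hjd : 2 * j < d) :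
    ∑ i ∈ Finset.range j, (-1 : SymF)^(i + d - j) * ee i *
        (schur (d - j + 1) (fun k => if (k : ℕ) = 0 then m + j - i else 1)
          + schur (d - j) (fun k => if (k : ℕ) = 0 then m + j - i + 1 else 1))
    = (-1 : SymF)^(d-1) *
        schur (d - j)
          (fun k => if (k : ℕ) = 0 then m + 2 else if (k : ℕ) ≤ j - 1 then 2 else 1)
      + (-1 : SymF)^(d-1) * ee (j-1) *
          schur (d - j + 1) (fun k => if (k : ℕ) = 0 then m + 1 else 1) :=
  stmt18_general m d j hj hjd
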